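/- arXiv:2006.09698 — 2 statements merged into one kernel-verified Lean document; each statement's English description precedes it below -/
import Mathlib

section
/- The non-convex pentagon with vertices (0,0),(4,0),(2,2),(2,3),(0,3) (a lattice pentagon with angle pattern 5·π/4, 2·π/4, 2·π/4, 2·π/4, 1·π/4), realized as the union of the convex hull of {(0,0),(4,0),(2,2)} and the convex hull of {(0,0),(2,2),(2,3),(0,3)}, is a tangram. -/
noncomputable section

/-- The Euclidean plane ℝ². -/
abbrev Plane : Type := EuclideanSpace ℝ (Fin 2)

/-- The point (x, y) of the Euclidean plane. -/
def pt (x y : ℝ) : Plane := (WithLp.equiv 2 (Fin 2 → ℝ)).symm ![x, y]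

/-- The seven tans: two small triangles, one medium triangle, two large triangles,
the square and the parallelogram. -/
def tanPiece : Fin 7 → Set Plane
  | 0 => convexHull ℝ {pt 0 0, pt 1 0, pt 0 1}
  | 1 => convexHull ℝ {pt 0 0, pt 1 0, pt 0 1}
  | 2 => convexHull ℝ {pt 0 0, pt (Real.sqrt 2) 0, pt 0 (Real.sqrt 2)}
  | 3 => convexHull ℝ {pt 0 0, pt 2 0, pt 0 2}
  | 4 => convexHull ℝ {pt 0 0, pt 2 0, pt 0 2}
  | 5 => convexHull ℝ {pt 0 0, pt 1 0, pt 1 1, pt 0 1}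
  | 6 => convexHull ℝ {pt 0 0, pt 1 0, pt 2 1, pt 1 1}

/-- A set `T ⊆ ℝ²` is a tangram if there are isometries `g 0, …, g 6` of the plane
such that `T` is the union of the images `g i '' tanPiece i` and these images have
pairwise disjoint interiors. -/
def IsTangram (T : Set Plane) : Prop :=
  ∃ g : Fin 7 → (Plane ≃ᵢ Plane),
    T = ⋃ i, (g i) '' tanPiece i ∧
    Pairwise fun i j =>
      Disjoint (interior ((g i) '' tanPiece i)) (interior ((g j) '' tanPiece j))

/-! ### Auxiliary machinery -/

lemma Plane.ext' {p q : Plane} (h0 : p 0 = q 0) (h1 : p 1 = q 1) : p = q := by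
  ext i; fin_cases i <;> assumption

/-- data of an orthogonal 2×2 matrix -/
structure Orth (a b c d : ℝ) : Prop where
  r1 : a^2 + b^2 = 1
  r2 : c^2 + d^2 = 1
  r3 : a*c + b*d = 0
  c1 : a^2 + c^2 = 1
  c2 : b^2 + d^2 = 1
  c3 : a*b + c*d = 0

def rotFun (a b c d : ℝ) (p : Plane) : Plane := pt (a * p 0 + b * p 1) (c * p 0 + d * p 1)

def rot (a b c d : ℝ) (h : Orth a b c d) : Plane ≃ₗᵢ[ℝ] Plane where
  toLinearEquiv :=
  { toFun := rotFun a b c d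
    invFun := rotFun a c b d
    map_add' := fun p q => by apply Plane.ext' <;> simp [rotFun, pt] <;> ring
    map_smul' := fun r p => by apply Plane.ext' <;> simp [rotFun, pt] <;> ring
    left_inv := fun p => by
      apply Plane.ext' <;> simp [rotFun, pt] <;>
        [linear_combination p 0 * h.c1 + p 1 * h.c3; linear_combination p 0 * h.c3 + p 1 * h.c2]
    right_inv := fun p => by
      apply Plane.ext' <;> simp [rotFun, pt] <;>
        [linear_combination p 0 * h.r1 + p 1 * h.r3; linear_combination p 0 * h.r3 + p 1 * h.r2] }
  norm_map' := fun p => by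
    rw [EuclideanSpace.norm_eq, EuclideanSpace.norm_eq]
    congr 1
    simp [rotFun, pt, Fin.sum_univ_two, Real.norm_eq_abs, sq_abs]
    linear_combination (p 0)^2 * h.c1 + (p 1)^2 * h.c2 + (2 * p 0 * p 1) * h.c3

/-- the isometry `x ↦ rot x + (e, f)` -/
def gm (a b c d : ℝ) (h : Orth a b c d) (e f : ℝ) : Plane ≃ᵢ Plane :=
  (rot a b c d h).toIsometryEquiv.trans (IsometryEquiv.addRight (pt e f))

/-- the same map as an affine map -/
def am (a b c d e f : ℝ) : Plane →ᵃ[ℝ] Plane where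
  toFun := fun p => pt (a * p 0 + b * p 1 + e) (c * p 0 + d * p 1 + f)
  linear :=
  { toFun := rotFun a b c d
    map_add' := fun p q => by apply Plane.ext' <;> simp [rotFun, pt] <;> ring
    map_smul' := fun r p => by apply Plane.ext' <;> simp [rotFun, pt] <;> ring }
  map_vadd' := fun p v => by
    apply Plane.ext' <;> simp [rotFun, pt] <;> ring

lemma gm_coe (a b c d : ℝ) (h : Orth a b c d) (e f : ℝ) :
    ⇑(gm a b c d h e f) = ⇑(am a b c d e f) := by
  funext p
  show rotFun a b c d p + pt e f = _
  apply Plane.ext' <;> simp [rotFun, pt, am]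

lemma gm_image (a b c d : ℝ) (h : Orth a b c d) (e f : ℝ) (S : Set Plane) :
    (gm a b c d h e f) '' (convexHull ℝ S) = convexHull ℝ ((am a b c d e f) '' S) := by
  rw [gm_coe, AffineMap.image_convexHull]

lemma am_pt (a b c d e f x y : ℝ) :
    am a b c d e f (pt x y) = pt (a*x + b*y + e) (c*x + d*y + f) := rfl

lemma mem_hull3 {v1 v2 v3 x : Plane} (α β γ : ℝ) (hα : 0 ≤ α) (hβ : 0 ≤ β) (hγ : 0 ≤ γ)
    (hs : α + β + γ = 1) (hx : α • v1 + β • v2 + γ • v3 = x) :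
    x ∈ convexHull ℝ ({v1, v2, v3} : Set Plane) := by
  have := (convex_convexHull ℝ ({v1, v2, v3} : Set Plane)).sum_mem
    (t := Finset.univ) (w := ![α, β, γ]) (z := ![v1, v2, v3])
    (by intro i _; fin_cases i <;> assumption)
    (by simp [Fin.sum_univ_three, hs])
    (by intro i _; fin_cases i <;> apply subset_convexHull <;> simp)
  rw [Fin.sum_univ_three] at this
  simpa [hx] using this

lemma mem_hull4 {v1 v2 v3 v4 x : Plane} (α β γ δ : ℝ) (hα : 0 ≤ α) (hβ : 0 ≤ β) (hγ : 0 ≤ γ)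
    (hδ : 0 ≤ δ) (hs : α + β + γ + δ = 1) (hx : α • v1 + β • v2 + γ • v3 + δ • v4 = x) :
    x ∈ convexHull ℝ ({v1, v2, v3, v4} : Set Plane) := by
  have := (convex_convexHull ℝ ({v1, v2, v3, v4} : Set Plane)).sum_mem
    (t := Finset.univ) (w := ![α, β, γ, δ]) (z := ![v1, v2, v3, v4])
    (by intro i _; fin_cases i <;> assumption)
    (by simp [Fin.sum_univ_four, hs])
    (by intro i _; fin_cases i <;> apply subset_convexHull <;> simp)
  rw [Fin.sum_univ_four] at this
  simpa [hx] using this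

/-- closed halfplane -/
def HP (a b c : ℝ) : Set Plane := {p | a * p 0 + b * p 1 ≤ c}

lemma convex_HP (a b c : ℝ) : Convex ℝ (HP a b c) := by
  intro x hx y hy s t hs ht hst
  have hx' : a * x 0 + b * x 1 ≤ c := hx
  have hy' : a * y 0 + b * y 1 ≤ c := hy
  show a * (s * x 0 + t * y 0) + b * (s * x 1 + t * y 1) ≤ c
  have hc : s * c + t * c = c := by rw [← add_mul, hst, one_mul]
  nlinarith [mul_le_mul_of_nonneg_left hx' hs, mul_le_mul_of_nonneg_left hy' ht, hc]

lemma interior_HP {a b c : ℝ} (hab : a ≠ 0 ∨ b ≠ 0) :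
    interior (HP a b c) ⊆ {p : Plane | a * p 0 + b * p 1 < c} := by
  intro p hp
  have hmem0 : p ∈ HP a b c := interior_subset hp
  have hmem : a * p 0 + b * p 1 ≤ c := hmem0
  rcases lt_or_eq_of_le hmem with h | h
  · exact h
  exfalso
  obtain ⟨ε, hε, hball⟩ := Metric.isOpen_iff.1 isOpen_interior p hp
  set v : Plane := pt a b with hv
  have hvne : v ≠ 0 := by
    intro hz
    have h0 : v 0 = 0 := by rw [hz]; rfl
    have h1 : v 1 = 0 := by rw [hz]; rfl
    rcases hab with h' | h' <;> simp [hv, pt] at h0 h1 <;> exact absurd (by assumption) h'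
  have hvpos : 0 < ‖v‖ := norm_pos_iff.2 hvne
  set t : ℝ := ε / (2 * ‖v‖) with ht
  have htpos : 0 < t := by positivity
  have hq : p + t • v ∈ Metric.ball p ε := by
    rw [Metric.mem_ball, dist_eq_norm]
    have : p + t • v - p = t • v := by abel
    rw [this, norm_smul, Real.norm_eq_abs, abs_of_pos htpos]
    rw [ht]
    rw [div_mul_eq_mul_div]
    rw [div_lt_iff₀ (by positivity)]
    nlinarith
  have hqS : p + t • v ∈ HP a b c := interior_subset (hball hq)
  have hc0 : (p + t • v) 0 = p 0 + t * a := by simp [hv, pt]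
  have hc1 : (p + t • v) 1 = p 1 + t * b := by simp [hv, pt]
  have habpos : 0 < a^2 + b^2 := by
    rcases hab with h' | h' <;> positivity
  have : a * (p 0 + t * a) + b * (p 1 + t * b) ≤ c := by
    have := hqS; simpa [HP, hc0, hc1] using this
  nlinarith

lemma hull_le {V : Set Plane} {a b c : ℝ} (h : ∀ v ∈ V, a * v 0 + b * v 1 ≤ c) :
    convexHull ℝ V ⊆ HP a b c := convexHull_min h (convex_HP a b c)

lemma int_hull_lt {V : Set Plane} {a b c : ℝ} (hab : a ≠ 0 ∨ b ≠ 0)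
    (h : ∀ v ∈ V, a * v 0 + b * v 1 ≤ c) {p : Plane} (hp : p ∈ interior (convexHull ℝ V)) :
    a * p 0 + b * p 1 < c :=
  interior_HP hab (interior_mono (hull_le h) hp)

/-! ### The seven placed pieces -/

lemma O0 : Orth (-1) 0 0 (-1) := by constructor <;> norm_num
lemma O1 : Orth 1 0 0 (-1) := by constructor <;> norm_num
lemma O2 : Orth (-(Real.sqrt 2)⁻¹) (-(Real.sqrt 2)⁻¹) (-(Real.sqrt 2)⁻¹) ((Real.sqrt 2)⁻¹) := by
  have h2 : Real.sqrt 2 ^ 2 = 2 := Real.sq_sqrt (by norm_num)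
  have h0 : Real.sqrt 2 ≠ 0 := by positivity
  constructor <;> field_simp <;> nlinarith [h2]
lemma O3 : Orth (-1) 0 0 1 := by constructor <;> norm_num
lemma O4 : Orth 1 0 0 1 := by constructor <;> norm_num
lemma O6 : Orth 0 1 1 0 := by constructor <;> norm_num

def g0 : Plane ≃ᵢ Plane := gm (-1) 0 0 (-1) O0 1 2
def g1 : Plane ≃ᵢ Plane := gm 1 0 0 (-1) O1 1 3
def g2 : Plane ≃ᵢ Plane :=
  gm (-(Real.sqrt 2)⁻¹) (-(Real.sqrt 2)⁻¹) (-(Real.sqrt 2)⁻¹) ((Real.sqrt 2)⁻¹) O2 1 1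
def g3 : Plane ≃ᵢ Plane := gm (-1) 0 0 1 O3 2 0
def g4 : Plane ≃ᵢ Plane := gm 1 0 0 1 O4 2 0
def g5 : Plane ≃ᵢ Plane := gm 1 0 0 1 O4 0 2
def g6 : Plane ≃ᵢ Plane := gm 0 1 1 0 O6 1 1

def V0 : Set Plane := {pt 1 2, pt 0 2, pt 1 1}
def V1 : Set Plane := {pt 1 3, pt 2 3, pt 1 2}
def V2 : Set Plane := {pt 1 1, pt 0 0, pt 0 2}
def V3 : Set Plane := {pt 2 0, pt 0 0, pt 2 2}
def V4 : Set Plane := {pt 2 0, pt 4 0, pt 2 2}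
def V5 : Set Plane := {pt 0 2, pt 1 2, pt 1 3, pt 0 3}
def V6 : Set Plane := {pt 1 1, pt 1 2, pt 2 3, pt 2 2}

lemma img0 : g0 '' tanPiece 0 = convexHull ℝ V0 := by
  show g0 '' (convexHull ℝ {pt 0 0, pt 1 0, pt 0 1}) = _
  rw [g0, gm_image]
  congr 1
  rw [Set.image_insert_eq, Set.image_insert_eq, Set.image_singleton, am_pt, am_pt, am_pt, V0]
  norm_num

lemma img1 : g1 '' tanPiece 1 = convexHull ℝ V1 := by
  show g1 '' (convexHull ℝ {pt 0 0, pt 1 0, pt 0 1}) = _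
  rw [g1, gm_image]
  congr 1
  rw [Set.image_insert_eq, Set.image_insert_eq, Set.image_singleton, am_pt, am_pt, am_pt, V1]
  norm_num

lemma img2 : g2 '' tanPiece 2 = convexHull ℝ V2 := by
  show g2 '' (convexHull ℝ {pt 0 0, pt (Real.sqrt 2) 0, pt 0 (Real.sqrt 2)}) = _
  rw [g2, gm_image]
  congr 1
  rw [Set.image_insert_eq, Set.image_insert_eq, Set.image_singleton, am_pt, am_pt, am_pt, V2]
  have h0 : Real.sqrt 2 ≠ 0 := by positivity
  have hh : (Real.sqrt 2)⁻¹ * Real.sqrt 2 = 1 := inv_mul_cancel₀ h0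
  norm_num [hh]

lemma img3 : g3 '' tanPiece 3 = convexHull ℝ V3 := by
  show g3 '' (convexHull ℝ {pt 0 0, pt 2 0, pt 0 2}) = _
  rw [g3, gm_image]
  congr 1
  rw [Set.image_insert_eq, Set.image_insert_eq, Set.image_singleton, am_pt, am_pt, am_pt, V3]
  norm_num

lemma img4 : g4 '' tanPiece 4 = convexHull ℝ V4 := by
  show g4 '' (convexHull ℝ {pt 0 0, pt 2 0, pt 0 2}) = _
  rw [g4, gm_image]
  congr 1
  rw [Set.image_insert_eq, Set.image_insert_eq, Set.image_singleton, am_pt, am_pt, am_pt, V4]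
  norm_num

lemma img5 : g5 '' tanPiece 5 = convexHull ℝ V5 := by
  show g5 '' (convexHull ℝ {pt 0 0, pt 1 0, pt 1 1, pt 0 1}) = _
  rw [g5, gm_image]
  congr 1
  rw [Set.image_insert_eq, Set.image_insert_eq, Set.image_insert_eq, Set.image_singleton,
    am_pt, am_pt, am_pt, am_pt, V5]
  norm_num

lemma img6 : g6 '' tanPiece 6 = convexHull ℝ V6 := by
  show g6 '' (convexHull ℝ {pt 0 0, pt 1 0, pt 2 1, pt 1 1}) = _
  rw [g6, gm_image]
  congr 1
  rw [Set.image_insert_eq, Set.image_insert_eq, Set.image_insert_eq, Set.image_singleton,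
    am_pt, am_pt, am_pt, am_pt, V6]
  norm_num
lemma S0 {p : Plane} (hp : p ∈ interior (convexHull ℝ V0)) :
    (1) * p 0 + (0) * p 1 < (1) ∧ (0) * p 0 + (1) * p 1 < (2) ∧ (-1) * p 0 + (-1) * p 1 < (-2) := by
  refine ⟨?_, ?_, ?_⟩
  · exact int_hull_lt (a := (1)) (b := (0)) (c := (1)) (by norm_num)
      (by rintro v (rfl|rfl|rfl) <;> norm_num [pt]) hp
  · exact int_hull_lt (a := (0)) (b := (1)) (c := (2)) (by norm_num)
      (by rintro v (rfl|rfl|rfl) <;> norm_num [pt]) hp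
  · exact int_hull_lt (a := (-1)) (b := (-1)) (c := (-2)) (by norm_num)
      (by rintro v (rfl|rfl|rfl) <;> norm_num [pt]) hp

lemma S1 {p : Plane} (hp : p ∈ interior (convexHull ℝ V1)) :
    (-1) * p 0 + (0) * p 1 < (-1) ∧ (0) * p 0 + (1) * p 1 < (3) ∧ (1) * p 0 + (-1) * p 1 < (-1) := by
  refine ⟨?_, ?_, ?_⟩
  · exact int_hull_lt (a := (-1)) (b := (0)) (c := (-1)) (by norm_num)
      (by rintro v (rfl|rfl|rfl) <;> norm_num [pt]) hp
  · exact int_hull_lt (a := (0)) (b := (1)) (c := (3)) (by norm_num)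
      (by rintro v (rfl|rfl|rfl) <;> norm_num [pt]) hp
  · exact int_hull_lt (a := (1)) (b := (-1)) (c := (-1)) (by norm_num)
      (by rintro v (rfl|rfl|rfl) <;> norm_num [pt]) hp

lemma S2 {p : Plane} (hp : p ∈ interior (convexHull ℝ V2)) :
    (-1) * p 0 + (0) * p 1 < (0) ∧ (1) * p 0 + (-1) * p 1 < (0) ∧ (1) * p 0 + (1) * p 1 < (2) := by
  refine ⟨?_, ?_, ?_⟩
  · exact int_hull_lt (a := (-1)) (b := (0)) (c := (0)) (by norm_num)
      (by rintro v (rfl|rfl|rfl) <;> norm_num [pt]) hp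
  · exact int_hull_lt (a := (1)) (b := (-1)) (c := (0)) (by norm_num)
      (by rintro v (rfl|rfl|rfl) <;> norm_num [pt]) hp
  · exact int_hull_lt (a := (1)) (b := (1)) (c := (2)) (by norm_num)
      (by rintro v (rfl|rfl|rfl) <;> norm_num [pt]) hp

lemma S3 {p : Plane} (hp : p ∈ interior (convexHull ℝ V3)) :
    (0) * p 0 + (-1) * p 1 < (0) ∧ (1) * p 0 + (0) * p 1 < (2) ∧ (-1) * p 0 + (1) * p 1 < (0) := by
  refine ⟨?_, ?_, ?_⟩
  · exact int_hull_lt (a := (0)) (b := (-1)) (c := (0)) (by norm_num)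
      (by rintro v (rfl|rfl|rfl) <;> norm_num [pt]) hp
  · exact int_hull_lt (a := (1)) (b := (0)) (c := (2)) (by norm_num)
      (by rintro v (rfl|rfl|rfl) <;> norm_num [pt]) hp
  · exact int_hull_lt (a := (-1)) (b := (1)) (c := (0)) (by norm_num)
      (by rintro v (rfl|rfl|rfl) <;> norm_num [pt]) hp

lemma S4 {p : Plane} (hp : p ∈ interior (convexHull ℝ V4)) :
    (0) * p 0 + (-1) * p 1 < (0) ∧ (-1) * p 0 + (0) * p 1 < (-2) ∧ (1) * p 0 + (1) * p 1 < (4) := by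
  refine ⟨?_, ?_, ?_⟩
  · exact int_hull_lt (a := (0)) (b := (-1)) (c := (0)) (by norm_num)
      (by rintro v (rfl|rfl|rfl) <;> norm_num [pt]) hp
  · exact int_hull_lt (a := (-1)) (b := (0)) (c := (-2)) (by norm_num)
      (by rintro v (rfl|rfl|rfl) <;> norm_num [pt]) hp
  · exact int_hull_lt (a := (1)) (b := (1)) (c := (4)) (by norm_num)
      (by rintro v (rfl|rfl|rfl) <;> norm_num [pt]) hp

lemma S5 {p : Plane} (hp : p ∈ interior (convexHull ℝ V5)) :
    (-1) * p 0 + (0) * p 1 < (0) ∧ (1) * p 0 + (0) * p 1 < (1) ∧ (0) * p 0 + (-1) * p 1 < (-2) ∧ (0) * p 0 + (1) * p 1 < (3) := by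
  refine ⟨?_, ?_, ?_, ?_⟩
  · exact int_hull_lt (a := (-1)) (b := (0)) (c := (0)) (by norm_num)
      (by rintro v (rfl|rfl|rfl|rfl) <;> norm_num [pt]) hp
  · exact int_hull_lt (a := (1)) (b := (0)) (c := (1)) (by norm_num)
      (by rintro v (rfl|rfl|rfl|rfl) <;> norm_num [pt]) hp
  · exact int_hull_lt (a := (0)) (b := (-1)) (c := (-2)) (by norm_num)
      (by rintro v (rfl|rfl|rfl|rfl) <;> norm_num [pt]) hp
  · exact int_hull_lt (a := (0)) (b := (1)) (c := (3)) (by norm_num)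
      (by rintro v (rfl|rfl|rfl|rfl) <;> norm_num [pt]) hp

lemma S6 {p : Plane} (hp : p ∈ interior (convexHull ℝ V6)) :
    (-1) * p 0 + (0) * p 1 < (-1) ∧ (1) * p 0 + (0) * p 1 < (2) ∧ (1) * p 0 + (-1) * p 1 < (0) ∧ (-1) * p 0 + (1) * p 1 < (1) := by
  refine ⟨?_, ?_, ?_, ?_⟩
  · exact int_hull_lt (a := (-1)) (b := (0)) (c := (-1)) (by norm_num)
      (by rintro v (rfl|rfl|rfl|rfl) <;> norm_num [pt]) hp
  · exact int_hull_lt (a := (1)) (b := (0)) (c := (2)) (by norm_num)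
      (by rintro v (rfl|rfl|rfl|rfl) <;> norm_num [pt]) hp
  · exact int_hull_lt (a := (1)) (b := (-1)) (c := (0)) (by norm_num)
      (by rintro v (rfl|rfl|rfl|rfl) <;> norm_num [pt]) hp
  · exact int_hull_lt (a := (-1)) (b := (1)) (c := (1)) (by norm_num)
      (by rintro v (rfl|rfl|rfl|rfl) <;> norm_num [pt]) hp

lemma D01 : Disjoint (interior (convexHull ℝ V0)) (interior (convexHull ℝ V1)) :=
  Set.disjoint_left.2 fun p h0 h1 => by
    obtain ⟨a0, a1, a2⟩ := S0 h0
    obtain ⟨b0, b1, b2⟩ := S1 h1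
    linarith

lemma D02 : Disjoint (interior (convexHull ℝ V0)) (interior (convexHull ℝ V2)) :=
  Set.disjoint_left.2 fun p h0 h2 => by
    obtain ⟨a0, a1, a2⟩ := S0 h0
    obtain ⟨b0, b1, b2⟩ := S2 h2
    linarith

lemma D03 : Disjoint (interior (convexHull ℝ V0)) (interior (convexHull ℝ V3)) :=
  Set.disjoint_left.2 fun p h0 h3 => by
    obtain ⟨a0, a1, a2⟩ := S0 h0
    obtain ⟨b0, b1, b2⟩ := S3 h3
    linarith

lemma D04 : Disjoint (interior (convexHull ℝ V0)) (interior (convexHull ℝ V4)) :=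
  Set.disjoint_left.2 fun p h0 h4 => by
    obtain ⟨a0, a1, a2⟩ := S0 h0
    obtain ⟨b0, b1, b2⟩ := S4 h4
    linarith

lemma D05 : Disjoint (interior (convexHull ℝ V0)) (interior (convexHull ℝ V5)) :=
  Set.disjoint_left.2 fun p h0 h5 => by
    obtain ⟨a0, a1, a2⟩ := S0 h0
    obtain ⟨b0, b1, b2, b3⟩ := S5 h5
    linarith

lemma D06 : Disjoint (interior (convexHull ℝ V0)) (interior (convexHull ℝ V6)) :=
  Set.disjoint_left.2 fun p h0 h6 => by
    obtain ⟨a0, a1, a2⟩ := S0 h0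
    obtain ⟨b0, b1, b2, b3⟩ := S6 h6
    linarith

lemma D12 : Disjoint (interior (convexHull ℝ V1)) (interior (convexHull ℝ V2)) :=
  Set.disjoint_left.2 fun p h1 h2 => by
    obtain ⟨a0, a1, a2⟩ := S1 h1
    obtain ⟨b0, b1, b2⟩ := S2 h2
    linarith

lemma D13 : Disjoint (interior (convexHull ℝ V1)) (interior (convexHull ℝ V3)) :=
  Set.disjoint_left.2 fun p h1 h3 => by
    obtain ⟨a0, a1, a2⟩ := S1 h1
    obtain ⟨b0, b1, b2⟩ := S3 h3
    linarith

lemma D14 : Disjoint (interior (convexHull ℝ V1)) (interior (convexHull ℝ V4)) :=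
  Set.disjoint_left.2 fun p h1 h4 => by
    obtain ⟨a0, a1, a2⟩ := S1 h1
    obtain ⟨b0, b1, b2⟩ := S4 h4
    linarith

lemma D15 : Disjoint (interior (convexHull ℝ V1)) (interior (convexHull ℝ V5)) :=
  Set.disjoint_left.2 fun p h1 h5 => by
    obtain ⟨a0, a1, a2⟩ := S1 h1
    obtain ⟨b0, b1, b2, b3⟩ := S5 h5
    linarith

lemma D16 : Disjoint (interior (convexHull ℝ V1)) (interior (convexHull ℝ V6)) :=
  Set.disjoint_left.2 fun p h1 h6 => by
    obtain ⟨a0, a1, a2⟩ := S1 h1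
    obtain ⟨b0, b1, b2, b3⟩ := S6 h6
    linarith

lemma D23 : Disjoint (interior (convexHull ℝ V2)) (interior (convexHull ℝ V3)) :=
  Set.disjoint_left.2 fun p h2 h3 => by
    obtain ⟨a0, a1, a2⟩ := S2 h2
    obtain ⟨b0, b1, b2⟩ := S3 h3
    linarith

lemma D24 : Disjoint (interior (convexHull ℝ V2)) (interior (convexHull ℝ V4)) :=
  Set.disjoint_left.2 fun p h2 h4 => by
    obtain ⟨a0, a1, a2⟩ := S2 h2
    obtain ⟨b0, b1, b2⟩ := S4 h4
    linarith

lemma D25 : Disjoint (interior (convexHull ℝ V2)) (interior (convexHull ℝ V5)) :=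
  Set.disjoint_left.2 fun p h2 h5 => by
    obtain ⟨a0, a1, a2⟩ := S2 h2
    obtain ⟨b0, b1, b2, b3⟩ := S5 h5
    linarith

lemma D26 : Disjoint (interior (convexHull ℝ V2)) (interior (convexHull ℝ V6)) :=
  Set.disjoint_left.2 fun p h2 h6 => by
    obtain ⟨a0, a1, a2⟩ := S2 h2
    obtain ⟨b0, b1, b2, b3⟩ := S6 h6
    linarith

lemma D34 : Disjoint (interior (convexHull ℝ V3)) (interior (convexHull ℝ V4)) :=
  Set.disjoint_left.2 fun p h3 h4 => by
    obtain ⟨a0, a1, a2⟩ := S3 h3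
    obtain ⟨b0, b1, b2⟩ := S4 h4
    linarith

lemma D35 : Disjoint (interior (convexHull ℝ V3)) (interior (convexHull ℝ V5)) :=
  Set.disjoint_left.2 fun p h3 h5 => by
    obtain ⟨a0, a1, a2⟩ := S3 h3
    obtain ⟨b0, b1, b2, b3⟩ := S5 h5
    linarith

lemma D36 : Disjoint (interior (convexHull ℝ V3)) (interior (convexHull ℝ V6)) :=
  Set.disjoint_left.2 fun p h3 h6 => by
    obtain ⟨a0, a1, a2⟩ := S3 h3
    obtain ⟨b0, b1, b2, b3⟩ := S6 h6
    linarith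

lemma D45 : Disjoint (interior (convexHull ℝ V4)) (interior (convexHull ℝ V5)) :=
  Set.disjoint_left.2 fun p h4 h5 => by
    obtain ⟨a0, a1, a2⟩ := S4 h4
    obtain ⟨b0, b1, b2, b3⟩ := S5 h5
    linarith

lemma D46 : Disjoint (interior (convexHull ℝ V4)) (interior (convexHull ℝ V6)) :=
  Set.disjoint_left.2 fun p h4 h6 => by
    obtain ⟨a0, a1, a2⟩ := S4 h4
    obtain ⟨b0, b1, b2, b3⟩ := S6 h6
    linarith

lemma D56 : Disjoint (interior (convexHull ℝ V5)) (interior (convexHull ℝ V6)) :=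
  Set.disjoint_left.2 fun p h5 h6 => by
    obtain ⟨a0, a1, a2, a3⟩ := S5 h5
    obtain ⟨b0, b1, b2, b3⟩ := S6 h6
    linarith

/-! ### The pentagon -/

def T1 : Set Plane := {pt 0 0, pt 4 0, pt 2 2}
def Qd : Set Plane := {pt 0 0, pt 2 2, pt 2 3, pt 0 3}

lemma T1coords {p : Plane} (hp : p ∈ convexHull ℝ T1) :
    0 ≤ p 1 ∧ p 1 ≤ p 0 ∧ p 0 + p 1 ≤ 4 := by
  refine ⟨?_, ?_, ?_⟩
  · have := hull_le (V := T1) (a := 0) (b := -1) (c := 0)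
      (by rintro v (rfl|rfl|rfl) <;> norm_num [pt]) hp
    have h : (0:ℝ) * p 0 + (-1) * p 1 ≤ 0 := this
    linarith
  · have := hull_le (V := T1) (a := -1) (b := 1) (c := 0)
      (by rintro v (rfl|rfl|rfl) <;> norm_num [pt]) hp
    have h : (-1:ℝ) * p 0 + 1 * p 1 ≤ 0 := this
    linarith
  · have := hull_le (V := T1) (a := 1) (b := 1) (c := 4)
      (by rintro v (rfl|rfl|rfl) <;> norm_num [pt]) hp
    have h : (1:ℝ) * p 0 + 1 * p 1 ≤ 4 := this
    linarith

lemma Qcoords {p : Plane} (hp : p ∈ convexHull ℝ Qd) :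
    0 ≤ p 0 ∧ p 0 ≤ 2 ∧ p 0 ≤ p 1 ∧ p 1 ≤ 3 := by
  refine ⟨?_, ?_, ?_, ?_⟩
  · have := hull_le (V := Qd) (a := -1) (b := 0) (c := 0)
      (by rintro v (rfl|rfl|rfl|rfl) <;> norm_num [pt]) hp
    have h : (-1:ℝ) * p 0 + 0 * p 1 ≤ 0 := this
    linarith
  · have := hull_le (V := Qd) (a := 1) (b := 0) (c := 2)
      (by rintro v (rfl|rfl|rfl|rfl) <;> norm_num [pt]) hp
    have h : (1:ℝ) * p 0 + 0 * p 1 ≤ 2 := this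
    linarith
  · have := hull_le (V := Qd) (a := 1) (b := -1) (c := 0)
      (by rintro v (rfl|rfl|rfl|rfl) <;> norm_num [pt]) hp
    have h : (1:ℝ) * p 0 + (-1) * p 1 ≤ 0 := this
    linarith
  · have := hull_le (V := Qd) (a := 0) (b := 1) (c := 3)
      (by rintro v (rfl|rfl|rfl|rfl) <;> norm_num [pt]) hp
    have h : (0:ℝ) * p 0 + 1 * p 1 ≤ 3 := this
    linarith

lemma memT1 {x y : ℝ} (h0 : 0 ≤ y) (h1 : y ≤ x) (h2 : x + y ≤ 4) :
    pt x y ∈ convexHull ℝ T1 := by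
  apply mem_hull3 ((4 - x - y)/4) ((x - y)/4) (y/2)
  · linarith
  · linarith
  · linarith
  · ring
  · apply Plane.ext' <;> simp [pt] <;> ring

lemma memQd {x y : ℝ} (h0 : 0 ≤ x) (h1 : x ≤ 2) (h2 : x ≤ y) (h3 : y ≤ 3) :
    pt x y ∈ convexHull ℝ Qd := by
  have h3x : (0:ℝ) < 3 - x := by linarith
  set s : ℝ := (y - x)/(3 - x) with hsdef
  set t : ℝ := x/2 with htdef
  have hs0 : 0 ≤ s := div_nonneg (by linarith) (by linarith)
  have hs1 : s ≤ 1 := (div_le_one h3x).2 (by linarith)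
  have ht0 : 0 ≤ t := by positivity
  have ht1 : t ≤ 1 := by rw [htdef]; linarith
  apply mem_hull4 ((1-s)*(1-t)) ((1-s)*t) (s*t) (s*(1-t))
  · exact mul_nonneg (by linarith) (by linarith)
  · exact mul_nonneg (by linarith) ht0
  · exact mul_nonneg hs0 ht0
  · exact mul_nonneg hs0 (by linarith)
  · ring
  · apply Plane.ext' <;> simp [pt] <;> rw [hsdef, htdef] <;> field_simp <;> ring

/-! ### The main theorem -/

/-- The non-convex lattice pentagon with vertices (0,0), (4,0), (2,2), (2,3), (0,3),
realized as the union of the triangle with vertices (0,0), (4,0), (2,2) and the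
quadrilateral with vertices (0,0), (2,2), (2,3), (0,3), is a tangram. -/
theorem nonconvex_lattice_pentagon_is_tangram :
    IsTangram (convexHull ℝ {pt 0 0, pt 4 0, pt 2 2} ∪
      convexHull ℝ {pt 0 0, pt 2 2, pt 2 3, pt 0 3}) := by
  refine ⟨![g0, g1, g2, g3, g4, g5, g6], ?_, ?_⟩
  · -- the union
    have e0 : (![g0, g1, g2, g3, g4, g5, g6] : Fin 7 → Plane ≃ᵢ Plane) 0 '' tanPiece 0
        = convexHull ℝ V0 := img0
    have e1 : (![g0, g1, g2, g3, g4, g5, g6] : Fin 7 → Plane ≃ᵢ Plane) 1 '' tanPiece 1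
        = convexHull ℝ V1 := img1
    have e2 : (![g0, g1, g2, g3, g4, g5, g6] : Fin 7 → Plane ≃ᵢ Plane) 2 '' tanPiece 2
        = convexHull ℝ V2 := img2
    have e3 : (![g0, g1, g2, g3, g4, g5, g6] : Fin 7 → Plane ≃ᵢ Plane) 3 '' tanPiece 3
        = convexHull ℝ V3 := img3
    have e4 : (![g0, g1, g2, g3, g4, g5, g6] : Fin 7 → Plane ≃ᵢ Plane) 4 '' tanPiece 4
        = convexHull ℝ V4 := img4
    have e5 : (![g0, g1, g2, g3, g4, g5, g6] : Fin 7 → Plane ≃ᵢ Plane) 5 '' tanPiece 5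
        = convexHull ℝ V5 := img5
    have e6 : (![g0, g1, g2, g3, g4, g5, g6] : Fin 7 → Plane ≃ᵢ Plane) 6 '' tanPiece 6
        = convexHull ℝ V6 := img6
    ext p
    rw [Set.mem_iUnion]
    constructor
    · rintro (hp | hp)
      · -- triangle part
        obtain ⟨h0, h1, h2⟩ := T1coords hp
        rcases le_total (p 0) 2 with hx | hx
        · refine ⟨3, ?_⟩
          rw [e3, V3]
          apply mem_hull3 ((p 0 - p 1)/2) ((2 - p 0)/2) (p 1 / 2)
          · linarith
          · linarith
          · linarith
          · ring
          · apply Plane.ext' <;> simp [pt] <;> ring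
        · refine ⟨4, ?_⟩
          rw [e4, V4]
          apply mem_hull3 ((4 - p 0 - p 1)/2) ((p 0 - 2)/2) (p 1 / 2)
          · linarith
          · linarith
          · linarith
          · ring
          · apply Plane.ext' <;> simp [pt] <;> ring
      · -- quadrilateral part
        obtain ⟨h0, h1, h2, h3⟩ := Qcoords hp
        rcases le_total (p 0 + p 1) 2 with hxy | hxy
        · refine ⟨2, ?_⟩
          rw [e2, V2]
          apply mem_hull3 (p 0) ((2 - p 0 - p 1)/2) ((p 1 - p 0)/2)
          · linarith
          · linarith
          · linarith
          · ring
          · apply Plane.ext' <;> simp [pt] <;> ring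
        · rcases le_total (p 0) 1 with hx | hx
          · rcases le_total (p 1) 2 with hy | hy
            · refine ⟨0, ?_⟩
              rw [e0, V0]
              apply mem_hull3 (p 0 + p 1 - 2) (1 - p 0) (2 - p 1)
              · linarith
              · linarith
              · linarith
              · ring
              · apply Plane.ext' <;> simp [pt] <;> ring
            · refine ⟨5, ?_⟩
              rw [e5, V5]
              apply mem_hull4 ((1 - p 0) * (1 - (p 1 - 2))) (p 0 * (1 - (p 1 - 2)))
                (p 0 * (p 1 - 2)) ((1 - p 0) * (p 1 - 2))
              · exact mul_nonneg (by linarith) (by linarith)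
              · exact mul_nonneg (by linarith) (by linarith)
              · exact mul_nonneg (by linarith) (by linarith)
              · exact mul_nonneg (by linarith) (by linarith)
              · ring
              · apply Plane.ext' <;> simp [pt] <;> ring
          · rcases le_total (p 1) (p 0 + 1) with hy | hy
            · refine ⟨6, ?_⟩
              rw [e6, V6]
              apply mem_hull4 ((1 - (p 0 - 1)) * (1 - (p 1 - p 0)))
                ((1 - (p 0 - 1)) * (p 1 - p 0)) ((p 0 - 1) * (p 1 - p 0))
                ((p 0 - 1) * (1 - (p 1 - p 0)))
              · exact mul_nonneg (by linarith) (by linarith)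
              · exact mul_nonneg (by linarith) (by linarith)
              · exact mul_nonneg (by linarith) (by linarith)
              · exact mul_nonneg (by linarith) (by linarith)
              · ring
              · apply Plane.ext' <;> simp [pt] <;> ring
            · refine ⟨1, ?_⟩
              rw [e1, V1]
              apply mem_hull3 (p 1 - p 0 - 1) (p 0 - 1) (3 - p 1)
              · linarith
              · linarith
              · linarith
              · ring
              · apply Plane.ext' <;> simp [pt] <;> ring
    · rintro ⟨i, hi⟩
      fin_cases i
      · have hi' : p ∈ g0 '' tanPiece 0 := hi
        rw [img0] at hi'
        clear hi
        have hi := hi'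
        refine Or.inr (convexHull_min ?_ (convex_convexHull ℝ Qd) hi)
        rintro v (rfl|rfl|rfl)
        · exact memQd (by norm_num) (by norm_num) (by norm_num) (by norm_num)
        · exact memQd (by norm_num) (by norm_num) (by norm_num) (by norm_num)
        · exact memQd (by norm_num) (by norm_num) (by norm_num) (by norm_num)
      · have hi' : p ∈ g1 '' tanPiece 1 := hi
        rw [img1] at hi'
        clear hi
        have hi := hi'
        refine Or.inr (convexHull_min ?_ (convex_convexHull ℝ Qd) hi)
        rintro v (rfl|rfl|rfl) <;>
          exact memQd (by norm_num) (by norm_num) (by norm_num) (by norm_num)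
      · have hi' : p ∈ g2 '' tanPiece 2 := hi
        rw [img2] at hi'
        clear hi
        have hi := hi'
        refine Or.inr (convexHull_min ?_ (convex_convexHull ℝ Qd) hi)
        rintro v (rfl|rfl|rfl) <;>
          exact memQd (by norm_num) (by norm_num) (by norm_num) (by norm_num)
      · have hi' : p ∈ g3 '' tanPiece 3 := hi
        rw [img3] at hi'
        clear hi
        have hi := hi'
        refine Or.inl (convexHull_min ?_ (convex_convexHull ℝ T1) hi)
        rintro v (rfl|rfl|rfl) <;>
          exact memT1 (by norm_num) (by norm_num) (by norm_num)
      · have hi' : p ∈ g4 '' tanPiece 4 := hi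
        rw [img4] at hi'
        clear hi
        have hi := hi'
        refine Or.inl (convexHull_min ?_ (convex_convexHull ℝ T1) hi)
        rintro v (rfl|rfl|rfl) <;>
          exact memT1 (by norm_num) (by norm_num) (by norm_num)
      · have hi' : p ∈ g5 '' tanPiece 5 := hi
        rw [img5] at hi'
        clear hi
        have hi := hi'
        refine Or.inr (convexHull_min ?_ (convex_convexHull ℝ Qd) hi)
        rintro v (rfl|rfl|rfl|rfl) <;>
          exact memQd (by norm_num) (by norm_num) (by norm_num) (by norm_num)
      · have hi' : p ∈ g6 '' tanPiece 6 := hi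
        rw [img6] at hi'
        clear hi
        have hi := hi'
        refine Or.inr (convexHull_min ?_ (convex_convexHull ℝ Qd) hi)
        rintro v (rfl|rfl|rfl|rfl) <;>
          exact memQd (by norm_num) (by norm_num) (by norm_num) (by norm_num)
  · -- pairwise disjoint interiors
    intro i j hij
    fin_cases i <;> fin_cases j
    · exact absurd rfl hij
    · show Disjoint (interior (g0 '' tanPiece 0)) (interior (g1 '' tanPiece 1))
      rw [img0, img1]
      exact D01
    · show Disjoint (interior (g0 '' tanPiece 0)) (interior (g2 '' tanPiece 2))
      rw [img0, img2]
      exact D02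
    · show Disjoint (interior (g0 '' tanPiece 0)) (interior (g3 '' tanPiece 3))
      rw [img0, img3]
      exact D03
    · show Disjoint (interior (g0 '' tanPiece 0)) (interior (g4 '' tanPiece 4))
      rw [img0, img4]
      exact D04
    · show Disjoint (interior (g0 '' tanPiece 0)) (interior (g5 '' tanPiece 5))
      rw [img0, img5]
      exact D05
    · show Disjoint (interior (g0 '' tanPiece 0)) (interior (g6 '' tanPiece 6))
      rw [img0, img6]
      exact D06
    · show Disjoint (interior (g1 '' tanPiece 1)) (interior (g0 '' tanPiece 0))
      rw [img1, img0]
      exact D01.symm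
    · exact absurd rfl hij
    · show Disjoint (interior (g1 '' tanPiece 1)) (interior (g2 '' tanPiece 2))
      rw [img1, img2]
      exact D12
    · show Disjoint (interior (g1 '' tanPiece 1)) (interior (g3 '' tanPiece 3))
      rw [img1, img3]
      exact D13
    · show Disjoint (interior (g1 '' tanPiece 1)) (interior (g4 '' tanPiece 4))
      rw [img1, img4]
      exact D14
    · show Disjoint (interior (g1 '' tanPiece 1)) (interior (g5 '' tanPiece 5))
      rw [img1, img5]
      exact D15
    · show Disjoint (interior (g1 '' tanPiece 1)) (interior (g6 '' tanPiece 6))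
      rw [img1, img6]
      exact D16
    · show Disjoint (interior (g2 '' tanPiece 2)) (interior (g0 '' tanPiece 0))
      rw [img2, img0]
      exact D02.symm
    · show Disjoint (interior (g2 '' tanPiece 2)) (interior (g1 '' tanPiece 1))
      rw [img2, img1]
      exact D12.symm
    · exact absurd rfl hij
    · show Disjoint (interior (g2 '' tanPiece 2)) (interior (g3 '' tanPiece 3))
      rw [img2, img3]
      exact D23
    · show Disjoint (interior (g2 '' tanPiece 2)) (interior (g4 '' tanPiece 4))
      rw [img2, img4]
      exact D24
    · show Disjoint (interior (g2 '' tanPiece 2)) (interior (g5 '' tanPiece 5))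
      rw [img2, img5]
      exact D25
    · show Disjoint (interior (g2 '' tanPiece 2)) (interior (g6 '' tanPiece 6))
      rw [img2, img6]
      exact D26
    · show Disjoint (interior (g3 '' tanPiece 3)) (interior (g0 '' tanPiece 0))
      rw [img3, img0]
      exact D03.symm
    · show Disjoint (interior (g3 '' tanPiece 3)) (interior (g1 '' tanPiece 1))
      rw [img3, img1]
      exact D13.symm
    · show Disjoint (interior (g3 '' tanPiece 3)) (interior (g2 '' tanPiece 2))
      rw [img3, img2]
      exact D23.symm
    · exact absurd rfl hij
    · show Disjoint (interior (g3 '' tanPiece 3)) (interior (g4 '' tanPiece 4))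
      rw [img3, img4]
      exact D34
    · show Disjoint (interior (g3 '' tanPiece 3)) (interior (g5 '' tanPiece 5))
      rw [img3, img5]
      exact D35
    · show Disjoint (interior (g3 '' tanPiece 3)) (interior (g6 '' tanPiece 6))
      rw [img3, img6]
      exact D36
    · show Disjoint (interior (g4 '' tanPiece 4)) (interior (g0 '' tanPiece 0))
      rw [img4, img0]
      exact D04.symm
    · show Disjoint (interior (g4 '' tanPiece 4)) (interior (g1 '' tanPiece 1))
      rw [img4, img1]
      exact D14.symm
    · show Disjoint (interior (g4 '' tanPiece 4)) (interior (g2 '' tanPiece 2))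
      rw [img4, img2]
      exact D24.symm
    · show Disjoint (interior (g4 '' tanPiece 4)) (interior (g3 '' tanPiece 3))
      rw [img4, img3]
      exact D34.symm
    · exact absurd rfl hij
    · show Disjoint (interior (g4 '' tanPiece 4)) (interior (g5 '' tanPiece 5))
      rw [img4, img5]
      exact D45
    · show Disjoint (interior (g4 '' tanPiece 4)) (interior (g6 '' tanPiece 6))
      rw [img4, img6]
      exact D46
    · show Disjoint (interior (g5 '' tanPiece 5)) (interior (g0 '' tanPiece 0))
      rw [img5, img0]
      exact D05.symm
    · show Disjoint (interior (g5 '' tanPiece 5)) (interior (g1 '' tanPiece 1))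
      rw [img5, img1]
      exact D15.symm
    · show Disjoint (interior (g5 '' tanPiece 5)) (interior (g2 '' tanPiece 2))
      rw [img5, img2]
      exact D25.symm
    · show Disjoint (interior (g5 '' tanPiece 5)) (interior (g3 '' tanPiece 3))
      rw [img5, img3]
      exact D35.symm
    · show Disjoint (interior (g5 '' tanPiece 5)) (interior (g4 '' tanPiece 4))
      rw [img5, img4]
      exact D45.symm
    · exact absurd rfl hij
    · show Disjoint (interior (g5 '' tanPiece 5)) (interior (g6 '' tanPiece 6))
      rw [img5, img6]
      exact D56
    · show Disjoint (interior (g6 '' tanPiece 6)) (interior (g0 '' tanPiece 0))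
      rw [img6, img0]
      exact D06.symm
    · show Disjoint (interior (g6 '' tanPiece 6)) (interior (g1 '' tanPiece 1))
      rw [img6, img1]
      exact D16.symm
    · show Disjoint (interior (g6 '' tanPiece 6)) (interior (g2 '' tanPiece 2))
      rw [img6, img2]
      exact D26.symm
    · show Disjoint (interior (g6 '' tanPiece 6)) (interior (g3 '' tanPiece 3))
      rw [img6, img3]
      exact D36.symm
    · show Disjoint (interior (g6 '' tanPiece 6)) (interior (g4 '' tanPiece 4))
      rw [img6, img4]
      exact D46.symm
    · show Disjoint (interior (g6 '' tanPiece 6)) (interior (g5 '' tanPiece 5))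
      rw [img6, img5]
      exact D56.symm
    · exact absurd rfl hij
end
end

section
/- The non-convex pentagon with vertices (0,0),(4,0),(2,2),(2√2,2√2),(0,2√2) (a non-lattice pentagon: its five vertices do not all lie in a common isometric image of ℤ²), realized as the union of the convex hull of {(0,0),(4,0),(2,2)} and the convex hull of {(0,0),(2√2,2√2),(0,2√2)}, is a tangram. -/
noncomputable section

/-- The set of points of `ℝ²` with both coordinates integers. -/
def intLatticePts : Set Plane := {p | ∃ a b : ℤ, p = pt a b}

/-! ### Auxiliary infrastructure -/

@[simp] lemma pt_zero {x y : ℝ} : pt x y 0 = x := rfl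
@[simp] lemma pt_one {x y : ℝ} : pt x y 1 = y := rfl
lemma pt_eta (p : Plane) : p = pt (p 0) (p 1) := by
  ext i; fin_cases i <;> rfl
@[simp] lemma plane_add (p q : Plane) (i : Fin 2) : (p + q) i = p i + q i := rfl
@[simp] lemma plane_smul (r : ℝ) (p : Plane) (i : Fin 2) : (r • p) i = r * p i := rfl
lemma pt_ext {x y u v : ℝ} (h1 : x = u) (h2 : y = v) : pt x y = pt u v := by rw [h1, h2]
lemma pt_dist (a b c d : ℝ) : dist (pt a b) (pt c d) = Real.sqrt ((a-c)^2 + (b-d)^2) := by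
  rw [EuclideanSpace.dist_eq]; congr 1
  simp [Fin.sum_univ_two, Real.dist_eq, sq_abs]
lemma pt_norm (u v : ℝ) : ‖pt u v‖ = Real.sqrt (u^2 + v^2) := by
  rw [EuclideanSpace.norm_eq]; congr 1
  simp [Fin.sum_univ_two, sq_abs]

/-- Parameters of a planar isometry x ↦ A x + t with A = !![a,b;c,d] orthogonal. -/
structure IsoParam where
  a : ℝ
  b : ℝ
  c : ℝ
  d : ℝ
  e : ℝ
  f : ℝ
  hcol1 : a^2 + c^2 = 1
  hcol2 : b^2 + d^2 = 1
  hcol : a*b + c*d = 0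
  hrow1 : a^2 + b^2 = 1
  hrow2 : c^2 + d^2 = 1
  hrow : a*c + b*d = 0

namespace IsoParam
variable (P : IsoParam)

def app (p : Plane) : Plane := pt (P.a * p 0 + P.b * p 1 + P.e) (P.c * p 0 + P.d * p 1 + P.f)

def lin : Plane →ₗ[ℝ] Plane where
  toFun p := pt (P.a * p 0 + P.b * p 1) (P.c * p 0 + P.d * p 1)
  map_add' p q := by ext i; fin_cases i <;> simp <;> ring
  map_smul' r p := by ext i; fin_cases i <;> simp <;> ring

def aff : Plane →ᵃ[ℝ] Plane where
  toFun := P.app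
  linear := P.lin
  map_vadd' p v := by
    show P.app (v + p) = P.lin v + P.app p
    ext i; fin_cases i <;> simp [app, lin] <;> ring

def iso : Plane ≃ᵢ Plane where
  toFun := P.app
  invFun q := pt (P.a * (q 0 - P.e) + P.c * (q 1 - P.f)) (P.b * (q 0 - P.e) + P.d * (q 1 - P.f))
  left_inv p := by
    have c1 := P.hcol1; have c2 := P.hcol2; have c3 := P.hcol
    ext i; fin_cases i
    · simp [app]; linear_combination (p 0) * c1 + (p 1) * c3
    · simp [app]; linear_combination (p 0) * c3 + (p 1) * c2
  right_inv q := by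
    have h1 := P.hrow1; have h2 := P.hrow2; have h3 := P.hrow
    ext i; fin_cases i
    · simp [app]; linear_combination (q 0 - P.e) * h1 + (q 1 - P.f) * h3
    · simp [app]; linear_combination (q 0 - P.e) * h3 + (q 1 - P.f) * h2
  isometry_toFun := by
    apply Isometry.of_dist_eq
    intro p q
    show dist (P.app p) (P.app q) = dist p q
    rw [pt_eta p, pt_eta q, pt_dist]
    have c1 := P.hcol1; have c2 := P.hcol2; have c3 := P.hcol
    rw [show P.app (pt (p 0) (p 1)) = pt (P.a * p 0 + P.b * p 1 + P.e) (P.c * p 0 + P.d * p 1 + P.f) from rfl]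
    rw [show P.app (pt (q 0) (q 1)) = pt (P.a * q 0 + P.b * q 1 + P.e) (P.c * q 0 + P.d * q 1 + P.f) from rfl]
    rw [pt_dist]
    congr 1
    linear_combination ((p 0 - q 0)^2) * c1 + ((p 1 - q 1)^2) * c2 + (2*(p 0 - q 0)*(p 1 - q 1)) * c3

lemma iso_image_hull (S : Set Plane) :
    ⇑P.iso '' (convexHull ℝ S) = convexHull ℝ (P.app '' S) := by
  have : ⇑P.iso = ⇑P.aff := rfl
  rw [this, AffineMap.image_convexHull]
  rfl

@[simp] lemma app_pt (x y : ℝ) :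
    P.app (pt x y) = pt (P.a * x + P.b * y + P.e) (P.c * x + P.d * y + P.f) := rfl

end IsoParam

lemma hull_subset_halfplane {S : Set Plane} (u v c : ℝ)
    (h : ∀ p ∈ S, u * p 0 + v * p 1 ≤ c) :
    convexHull ℝ S ⊆ {p : Plane | u * p 0 + v * p 1 ≤ c} := by
  apply convexHull_min h
  have : IsLinearMap ℝ (fun p : Plane => u * p 0 + v * p 1) := by
    constructor <;> intro p q <;> simp <;> ring
  exact convex_halfSpace_le this c

lemma mem_tri_iff {ax ay bx by' cx cy : ℝ} (x y : ℝ)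
    (hD : 0 < (bx-ax)*(cy-ay) - (by'-ay)*(cx-ax)) :
    pt x y ∈ convexHull ℝ ({pt ax ay, pt bx by', pt cx cy} : Set Plane) ↔
      (0 ≤ (bx-ax)*(y-ay) - (by'-ay)*(x-ax) ∧
       0 ≤ (cx-bx)*(y-by') - (cy-by')*(x-bx) ∧
       0 ≤ (ax-cx)*(y-cy) - (ay-cy)*(x-cx)) := by
  constructor
  · intro hm
    refine ⟨?_, ?_, ?_⟩
    · have := hull_subset_halfplane (S := {pt ax ay, pt bx by', pt cx cy})
        ((by'-ay)) (-(bx-ax)) ((by'-ay)*ax - (bx-ax)*ay) ?_ hm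
      · simp at this; nlinarith
      · rintro p (rfl | rfl | rfl) <;> simp <;> nlinarith
    · have := hull_subset_halfplane (S := {pt ax ay, pt bx by', pt cx cy})
        ((cy-by')) (-(cx-bx)) ((cy-by')*bx - (cx-bx)*by') ?_ hm
      · simp at this; nlinarith
      · rintro p (rfl | rfl | rfl) <;> simp <;> nlinarith
    · have := hull_subset_halfplane (S := {pt ax ay, pt bx by', pt cx cy})
        ((ay-cy)) (-(ax-cx)) ((ay-cy)*cx - (ax-cx)*cy) ?_ hm
      · simp at this; nlinarith
      · rintro p (rfl | rfl | rfl) <;> simp <;> nlinarith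
  · rintro ⟨h1, h2, h3⟩
    set D := (bx-ax)*(cy-ay) - (by'-ay)*(cx-ax) with hDdef
    have hD0 : D ≠ 0 := ne_of_gt hD
    set w1 := ((cx-bx)*(y-by') - (cy-by')*(x-bx))/D with hw1
    set w2 := ((ax-cx)*(y-cy) - (ay-cy)*(x-cx))/D with hw2
    set w3 := ((bx-ax)*(y-ay) - (by'-ay)*(x-ax))/D with hw3
    have key := Finset.centerMass_mem_convexHull (t := (Finset.univ : Finset (Fin 3)))
      (w := ![w1, w2, w3]) (z := ![pt ax ay, pt bx by', pt cx cy])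
      (by intro i _; fin_cases i <;> simp [hw1, hw2, hw3] <;> positivity)
      (by
        simp [Fin.sum_univ_three, hw1, hw2, hw3]
        rw [← add_div, ← add_div]
        rw [show (cx-bx)*(y-by') - (cy-by')*(x-bx) + ((ax-cx)*(y-cy) - (ay-cy)*(x-cx))
          + ((bx-ax)*(y-ay) - (by'-ay)*(x-ax)) = D by rw [hDdef]; ring]
        positivity)
      (s := {pt ax ay, pt bx by', pt cx cy})
      (by intro i _; fin_cases i <;> simp)
    have : Finset.univ.centerMass ![w1, w2, w3] ![pt ax ay, pt bx by', pt cx cy] = pt x y := by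
      rw [Finset.centerMass]
      have hsum : ∑ i, ![w1, w2, w3] i = 1 := by
        simp [Fin.sum_univ_three, hw1, hw2, hw3]
        field_simp
        rw [hDdef]; ring
      rw [hsum]
      simp [Fin.sum_univ_three]
      ext i; fin_cases i
      · simp [hw1, hw2, hw3]; field_simp; rw [hDdef]; ring
      · simp [hw1, hw2, hw3]; field_simp; rw [hDdef]; ring
    rwa [this] at key

lemma disjoint_interior_sep {A B : Set Plane} (u v c : ℝ) (hne : 0 < u^2 + v^2)
    (hA : A ⊆ {p : Plane | u * p 0 + v * p 1 ≤ c})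
    (hB : B ⊆ {p : Plane | c ≤ u * p 0 + v * p 1}) :
    Disjoint (interior A) (interior B) := by
  rw [Set.disjoint_left]
  intro p hpA hpB
  have h1 : u * p 0 + v * p 1 ≤ c := hA (interior_subset hpA)
  have h2 : c ≤ u * p 0 + v * p 1 := hB (interior_subset hpB)
  rw [mem_interior_iff_mem_nhds, Metric.mem_nhds_iff] at hpA
  obtain ⟨ε, hε, hball⟩ := hpA
  have hn : 0 < Real.sqrt (u^2 + v^2) := Real.sqrt_pos.2 hne
  set d := ε / (2 * Real.sqrt (u^2 + v^2)) with hd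
  have hd0 : 0 < d := by positivity
  set q : Plane := p + d • pt u v with hq
  have hqA : q ∈ A := by
    apply hball
    rw [Metric.mem_ball, dist_self_add_left, norm_smul, pt_norm, Real.norm_eq_abs,
      abs_of_pos hd0, hd]
    rw [div_mul_eq_mul_div, div_lt_iff₀ (by positivity)]
    nlinarith
  have := hA hqA
  simp only [Set.mem_setOf_eq, hq, plane_add, plane_smul, pt_zero, pt_one] at this
  nlinarith

lemma disj_hulls (S T : Set Plane) (u v c : ℝ) (h0 : 0 < u^2 + v^2)
    (hS : ∀ p ∈ S, u * p 0 + v * p 1 ≤ c) (hT : ∀ p ∈ T, c ≤ u * p 0 + v * p 1) :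
    Disjoint (interior (convexHull ℝ S)) (interior (convexHull ℝ T)) := by
  apply disjoint_interior_sep u v c h0 (hull_subset_halfplane u v c hS)
  have := hull_subset_halfplane (S := T) (-u) (-v) (-c) (by intro p hp; have := hT p hp; simp; linarith)
  intro p hp
  have := this hp
  simp at this ⊢
  linarith

/-! ### The seven placed pieces -/

def s2 : ℝ := Real.sqrt 2
lemma s2_sq : s2^2 = 2 := Real.sq_sqrt (by norm_num)
lemma s2_pos : 0 < s2 := Real.sqrt_pos.2 (by norm_num)

def Q0 : IsoParam :=
  { a := -(s2/2), b := -(s2/2), c := -(s2/2), d := s2/2, e := s2/2, f := s2/2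
    hcol1 := by linear_combination s2_sq/2
    hcol2 := by linear_combination s2_sq/2
    hcol := by ring
    hrow1 := by linear_combination s2_sq/2
    hrow2 := by linear_combination s2_sq/2
    hrow := by ring }

def Q1 : IsoParam :=
  { a := -(s2/2), b := s2/2, c := s2/2, d := s2/2, e := s2, f := s2
    hcol1 := by linear_combination s2_sq/2
    hcol2 := by linear_combination s2_sq/2
    hcol := by ring
    hrow1 := by linear_combination s2_sq/2
    hrow2 := by linear_combination s2_sq/2
    hrow := by ring }

def Q2 : IsoParam :=
  { a := 0, b := 1, c := -1, d := 0, e := 0, f := 2*s2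
    hcol1 := by norm_num
    hcol2 := by norm_num
    hcol := by ring
    hrow1 := by norm_num
    hrow2 := by norm_num
    hrow := by ring }

def Q3 : IsoParam :=
  { a := -1, b := 0, c := 0, d := 1, e := 2, f := 0
    hcol1 := by norm_num
    hcol2 := by norm_num
    hcol := by ring
    hrow1 := by norm_num
    hrow2 := by norm_num
    hrow := by ring }

def Q4 : IsoParam :=
  { a := 1, b := 0, c := 0, d := 1, e := 2, f := 0
    hcol1 := by norm_num
    hcol2 := by norm_num
    hcol := by ring
    hrow1 := by norm_num
    hrow2 := by norm_num
    hrow := by ring }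

def Q5 : IsoParam :=
  { a := s2/2, b := -(s2/2), c := s2/2, d := s2/2, e := s2/2, f := s2/2
    hcol1 := by linear_combination s2_sq/2
    hcol2 := by linear_combination s2_sq/2
    hcol := by ring
    hrow1 := by linear_combination s2_sq/2
    hrow2 := by linear_combination s2_sq/2
    hrow := by ring }

def Q6 : IsoParam :=
  { a := s2/2, b := s2/2, c := s2/2, d := -(s2/2), e := s2/2, f := 3*s2/2
    hcol1 := by linear_combination s2_sq/2
    hcol2 := by linear_combination s2_sq/2
    hcol := by ring
    hrow1 := by linear_combination s2_sq/2
    hrow2 := by linear_combination s2_sq/2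
    hrow := by ring }

def pcT1 : Set Plane := convexHull ℝ {pt 0 0, pt (s2/2) (s2/2), pt 0 s2}
def pcT2 : Set Plane := convexHull ℝ {pt s2 s2, pt (3*s2/2) (3*s2/2), pt (s2/2) (3*s2/2)}
def pcMd : Set Plane := convexHull ℝ {pt 0 s2, pt s2 (2*s2), pt 0 (2*s2)}
def pcL1 : Set Plane := convexHull ℝ {pt 0 0, pt 2 0, pt 2 2}
def pcL2 : Set Plane := convexHull ℝ {pt 2 0, pt 4 0, pt 2 2}
def pcSq : Set Plane := convexHull ℝ {pt (s2/2) (s2/2), pt s2 s2, pt (s2/2) (3*s2/2), pt 0 s2}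
def pcPa : Set Plane := convexHull ℝ
  {pt (s2/2) (3*s2/2), pt s2 (2*s2), pt (2*s2) (2*s2), pt (3*s2/2) (3*s2/2)}

def gfun : Fin 7 → (Plane ≃ᵢ Plane) := ![Q0.iso, Q1.iso, Q2.iso, Q3.iso, Q4.iso, Q5.iso, Q6.iso]
def piece : Fin 7 → Set Plane := ![pcT1, pcT2, pcMd, pcL1, pcL2, pcSq, pcPa]

lemma im_piece : ∀ i, ⇑(gfun i) '' tanPiece i = piece i := by
  have hs := s2_sq
  intro i
  fin_cases i
  · show ⇑(Q0.iso) '' (convexHull ℝ {pt 0 0, pt 1 0, pt 0 1}) = pcT1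
    rw [IsoParam.iso_image_hull, pcT1]
    congr 1
    rw [Set.image_insert_eq, Set.image_insert_eq, Set.image_singleton]
    rw [show Q0.app (pt 0 0) = pt (s2/2) (s2/2) from pt_ext (by simp [Q0]; try ring) (by simp [Q0]; try ring),
        show Q0.app (pt 1 0) = pt 0 0 from pt_ext (by simp [Q0]; try ring) (by simp [Q0]; try ring),
        show Q0.app (pt 0 1) = pt 0 s2 from pt_ext (by simp [Q0]; try ring) (by simp [Q0]; try ring)]
    all_goals (ext p; simp [Set.mem_insert_iff]; try tauto)
  · show ⇑(Q1.iso) '' (convexHull ℝ {pt 0 0, pt 1 0, pt 0 1}) = pcT2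
    rw [IsoParam.iso_image_hull, pcT2]
    congr 1
    rw [Set.image_insert_eq, Set.image_insert_eq, Set.image_singleton]
    rw [show Q1.app (pt 0 0) = pt s2 s2 from pt_ext (by simp [Q1]; try ring) (by simp [Q1]; try ring),
        show Q1.app (pt 1 0) = pt (s2/2) (3*s2/2) from pt_ext (by simp [Q1]; try ring) (by simp [Q1]; try ring),
        show Q1.app (pt 0 1) = pt (3*s2/2) (3*s2/2) from pt_ext (by simp [Q1]; try ring) (by simp [Q1]; try ring)]
    all_goals (ext p; simp [Set.mem_insert_iff]; try tauto)
  · show ⇑(Q2.iso) '' (convexHull ℝ {pt 0 0, pt (Real.sqrt 2) 0, pt 0 (Real.sqrt 2)}) = pcMd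
    rw [IsoParam.iso_image_hull, pcMd]
    congr 1
    rw [Set.image_insert_eq, Set.image_insert_eq, Set.image_singleton]
    rw [show Q2.app (pt 0 0) = pt 0 (2*s2) from pt_ext (by simp [Q2]; try ring) (by simp [Q2]; try ring),
        show Q2.app (pt (Real.sqrt 2) 0) = pt 0 s2 from pt_ext (by simp [Q2, s2]; try ring) (by simp [Q2, s2]; try ring),
        show Q2.app (pt 0 (Real.sqrt 2)) = pt s2 (2*s2) from pt_ext (by simp [Q2, s2]; try ring) (by simp [Q2, s2]; try ring)]
    all_goals (ext p; simp [Set.mem_insert_iff]; try tauto)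
  · show ⇑(Q3.iso) '' (convexHull ℝ {pt 0 0, pt 2 0, pt 0 2}) = pcL1
    rw [IsoParam.iso_image_hull, pcL1]
    congr 1
    rw [Set.image_insert_eq, Set.image_insert_eq, Set.image_singleton]
    rw [show Q3.app (pt 0 0) = pt 2 0 from pt_ext (by simp [Q3]; try ring) (by simp [Q3]; try ring),
        show Q3.app (pt 2 0) = pt 0 0 from pt_ext (by simp [Q3]; try ring) (by simp [Q3]; try ring),
        show Q3.app (pt 0 2) = pt 2 2 from pt_ext (by simp [Q3]; try ring) (by simp [Q3]; try ring)]
    all_goals (ext p; simp [Set.mem_insert_iff]; try tauto)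
  · show ⇑(Q4.iso) '' (convexHull ℝ {pt 0 0, pt 2 0, pt 0 2}) = pcL2
    rw [IsoParam.iso_image_hull, pcL2]
    congr 1
    rw [Set.image_insert_eq, Set.image_insert_eq, Set.image_singleton]
    rw [show Q4.app (pt 0 0) = pt 2 0 from pt_ext (by simp [Q4]; try ring) (by simp [Q4]; try ring),
        show Q4.app (pt 2 0) = pt 4 0 from pt_ext (by simp [Q4]; try ring) (by simp [Q4]; try ring),
        show Q4.app (pt 0 2) = pt 2 2 from pt_ext (by simp [Q4]; try ring) (by simp [Q4]; try ring)]
    all_goals (ext p; simp [Set.mem_insert_iff]; try tauto)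
  · show ⇑(Q5.iso) '' (convexHull ℝ {pt 0 0, pt 1 0, pt 1 1, pt 0 1}) = pcSq
    rw [IsoParam.iso_image_hull, pcSq]
    congr 1
    rw [Set.image_insert_eq, Set.image_insert_eq, Set.image_insert_eq, Set.image_singleton]
    rw [show Q5.app (pt 0 0) = pt (s2/2) (s2/2) from pt_ext (by simp [Q5]; try ring) (by simp [Q5]; try ring),
        show Q5.app (pt 1 0) = pt s2 s2 from pt_ext (by simp [Q5]; try ring) (by simp [Q5]; try ring),
        show Q5.app (pt 1 1) = pt (s2/2) (3*s2/2) from pt_ext (by simp [Q5]; try ring) (by simp [Q5]; try ring),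
        show Q5.app (pt 0 1) = pt 0 s2 from pt_ext (by simp [Q5]; try ring) (by simp [Q5]; try ring)]
    all_goals (ext p; simp [Set.mem_insert_iff]; try tauto)
  · show ⇑(Q6.iso) '' (convexHull ℝ {pt 0 0, pt 1 0, pt 2 1, pt 1 1}) = pcPa
    rw [IsoParam.iso_image_hull, pcPa]
    congr 1
    rw [Set.image_insert_eq, Set.image_insert_eq, Set.image_insert_eq, Set.image_singleton]
    rw [show Q6.app (pt 0 0) = pt (s2/2) (3*s2/2) from pt_ext (by simp [Q6]; try ring) (by simp [Q6]; try ring),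
        show Q6.app (pt 1 0) = pt s2 (2*s2) from pt_ext (by simp [Q6]; try ring) (by simp [Q6]; try ring),
        show Q6.app (pt 2 1) = pt (2*s2) (2*s2) from pt_ext (by simp [Q6]; try ring) (by simp [Q6]; try ring),
        show Q6.app (pt 1 1) = pt (3*s2/2) (3*s2/2) from pt_ext (by simp [Q6]; try ring) (by simp [Q6]; try ring)]
    all_goals (ext p; simp [Set.mem_insert_iff]; try tauto)
def triA : Set Plane := convexHull ℝ {pt 0 0, pt 4 0, pt 2 2}
def triB : Set Plane := convexHull ℝ
  {pt 0 0, pt (2 * Real.sqrt 2) (2 * Real.sqrt 2), pt 0 (2 * Real.sqrt 2)}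

lemma triB_def : triB = convexHull ℝ {pt 0 0, pt (2*s2) (2*s2), pt 0 (2*s2)} := rfl

set_option maxHeartbeats 1000000 in
lemma cover_sub : triA ∪ triB ⊆ ⋃ i, piece i := by
  have hs := s2_sq; have hp0 := s2_pos
  · intro p hp
    rw [pt_eta p] at hp
    set x := p 0 with hxd; set y := p 1 with hyd
    rw [pt_eta p]
    cases hp with
    | inl h =>
      rw [triA, mem_tri_iff x y (by norm_num)] at h
      obtain ⟨h1, h2, h3⟩ := h
      by_cases hx : x ≤ 2
      · refine Set.mem_iUnion.2 ⟨3, ?_⟩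
        show pt x y ∈ pcL1
        rw [pcL1, mem_tri_iff x y (by norm_num)]
        refine ⟨by nlinarith, by nlinarith, by nlinarith⟩
      · refine Set.mem_iUnion.2 ⟨4, ?_⟩
        show pt x y ∈ pcL2
        rw [pcL2, mem_tri_iff x y (by norm_num)]
        refine ⟨by nlinarith, by nlinarith, by nlinarith⟩
    | inr h =>
      rw [triB_def, mem_tri_iff x y (by nlinarith)] at h
      obtain ⟨h1, h2, h3⟩ := h
      have hxy : x ≤ y := by nlinarith
      have hy2 : y ≤ 2*s2 := by nlinarith
      have hx0 : 0 ≤ x := by nlinarith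
      by_cases hmd : x + s2 ≤ y
      · refine Set.mem_iUnion.2 ⟨2, ?_⟩
        show pt x y ∈ pcMd
        rw [pcMd, mem_tri_iff x y (by nlinarith)]
        refine ⟨by nlinarith, by nlinarith, by nlinarith⟩
      · push_neg at hmd
        by_cases ht1 : x + y ≤ s2
        · refine Set.mem_iUnion.2 ⟨0, ?_⟩
          show pt x y ∈ pcT1
          rw [pcT1, mem_tri_iff x y (by nlinarith)]
          refine ⟨by nlinarith, by nlinarith, by nlinarith⟩
        · push_neg at ht1
          by_cases ht2 : x + y ≤ 2*s2
          · refine Set.mem_iUnion.2 ⟨5, ?_⟩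
            show pt x y ∈ pcSq
            rw [pcSq]
            by_cases hys : y ≤ s2
            · apply convexHull_mono
                (show ({pt (s2/2) (s2/2), pt s2 s2, pt 0 s2} : Set Plane) ⊆ _ by
                  intro q hq; simp at hq ⊢; tauto)
              rw [mem_tri_iff x y (by nlinarith)]
              refine ⟨by nlinarith, by nlinarith, by nlinarith⟩
            · push_neg at hys
              apply convexHull_mono
                (show ({pt 0 s2, pt s2 s2, pt (s2/2) (3*s2/2)} : Set Plane) ⊆ _ by
                  intro q hq; simp at hq ⊢; tauto)
              rw [mem_tri_iff x y (by nlinarith)]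
              refine ⟨by nlinarith, by nlinarith, by nlinarith⟩
          · push_neg at ht2
            by_cases hy32 : y ≤ 3*s2/2
            · refine Set.mem_iUnion.2 ⟨1, ?_⟩
              show pt x y ∈ pcT2
              rw [pcT2, mem_tri_iff x y (by nlinarith)]
              refine ⟨by nlinarith, by nlinarith, by nlinarith⟩
            · push_neg at hy32
              refine Set.mem_iUnion.2 ⟨6, ?_⟩
              show pt x y ∈ pcPa
              rw [pcPa]
              by_cases hp3 : x + y ≤ 3*s2
              · apply convexHull_mono
                  (show ({pt (s2/2) (3*s2/2), pt (3*s2/2) (3*s2/2), pt s2 (2*s2)} : Set Plane) ⊆ _ by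
                    intro q hq; simp at hq ⊢; tauto)
                rw [mem_tri_iff x y (by nlinarith)]
                refine ⟨by nlinarith, by nlinarith, by nlinarith⟩
              · push_neg at hp3
                apply convexHull_mono
                  (show ({pt s2 (2*s2), pt (3*s2/2) (3*s2/2), pt (2*s2) (2*s2)} : Set Plane) ⊆ _ by
                    intro q hq; simp at hq ⊢; tauto)
                rw [mem_tri_iff x y (by nlinarith)]
                refine ⟨by nlinarith, by nlinarith, by nlinarith⟩
set_option maxHeartbeats 1000000 in
lemma rev_sub : (⋃ i, piece i) ⊆ triA ∪ triB := by
  have hs := s2_sq; have hp0 := s2_pos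
  · apply Set.iUnion_subset
    intro i
    have hA : ∀ u v : ℝ, pt u v ∈ triA ↔
        (0 ≤ 4*v ∧ 0 ≤ (-2)*v - 2*(u-4) ∧ 0 ≤ (-2)*(v-2) + 2*(u-2)) := by
      intro u v
      rw [triA, mem_tri_iff u v (by norm_num)]
      constructor <;> rintro ⟨a1, a2, a3⟩ <;> refine ⟨by linarith, by linarith, by linarith⟩
    have hB : ∀ u v : ℝ, pt u v ∈ triB ↔
        (0 ≤ 2*s2*v - 2*s2*u ∧ 0 ≤ (-(2*s2))*(v-2*s2) ∧ 0 ≤ 2*s2*u) := by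
      intro u v
      rw [triB_def, mem_tri_iff u v (by nlinarith)]
      constructor <;> rintro ⟨a1, a2, a3⟩ <;> refine ⟨by nlinarith, by nlinarith, by nlinarith⟩
    fin_cases i
    · show pcT1 ⊆ _
      refine Set.Subset.trans ?_ Set.subset_union_right
      rw [pcT1]
      apply convexHull_min _ (convex_convexHull ℝ _)
      rintro p (rfl|rfl|rfl) <;> rw [show (convexHull ℝ _ : Set Plane) = triB from rfl, hB] <;>
        refine ⟨by nlinarith, by nlinarith, by nlinarith⟩
    · show pcT2 ⊆ _
      refine Set.Subset.trans ?_ Set.subset_union_right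
      rw [pcT2]
      apply convexHull_min _ (convex_convexHull ℝ _)
      rintro p (rfl|rfl|rfl) <;> rw [show (convexHull ℝ _ : Set Plane) = triB from rfl, hB] <;>
        refine ⟨by nlinarith, by nlinarith, by nlinarith⟩
    · show pcMd ⊆ _
      refine Set.Subset.trans ?_ Set.subset_union_right
      rw [pcMd]
      apply convexHull_min _ (convex_convexHull ℝ _)
      rintro p (rfl|rfl|rfl) <;> rw [show (convexHull ℝ _ : Set Plane) = triB from rfl, hB] <;>
        refine ⟨by nlinarith, by nlinarith, by nlinarith⟩
    · show pcL1 ⊆ _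
      refine Set.Subset.trans ?_ Set.subset_union_left
      rw [pcL1]
      apply convexHull_min _ (convex_convexHull ℝ _)
      rintro p (rfl|rfl|rfl) <;> rw [show (convexHull ℝ _ : Set Plane) = triA from rfl, hA] <;>
        refine ⟨by nlinarith, by nlinarith, by nlinarith⟩
    · show pcL2 ⊆ _
      refine Set.Subset.trans ?_ Set.subset_union_left
      rw [pcL2]
      apply convexHull_min _ (convex_convexHull ℝ _)
      rintro p (rfl|rfl|rfl) <;> rw [show (convexHull ℝ _ : Set Plane) = triA from rfl, hA] <;>
        refine ⟨by nlinarith, by nlinarith, by nlinarith⟩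
    · show pcSq ⊆ _
      refine Set.Subset.trans ?_ Set.subset_union_right
      rw [pcSq]
      apply convexHull_min _ (convex_convexHull ℝ _)
      rintro p (rfl|rfl|rfl|rfl) <;> rw [show (convexHull ℝ _ : Set Plane) = triB from rfl, hB] <;>
        refine ⟨by nlinarith, by nlinarith, by nlinarith⟩
    · show pcPa ⊆ _
      refine Set.Subset.trans ?_ Set.subset_union_right
      rw [pcPa]
      apply convexHull_min _ (convex_convexHull ℝ _)
      rintro p (rfl|rfl|rfl|rfl) <;> rw [show (convexHull ℝ _ : Set Plane) = triB from rfl, hB] <;>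
        refine ⟨by nlinarith, by nlinarith, by nlinarith⟩

lemma union_eq : triA ∪ triB = ⋃ i, piece i := Set.Subset.antisymm cover_sub rev_sub

set_option maxHeartbeats 2000000 in
lemma piece_disj : Pairwise fun i j : Fin 7 =>
    Disjoint (interior (piece i)) (interior (piece j)) := by
  have hs := s2_sq; have hp0 := s2_pos
  -- cross pairs: pieces of triangle A are below y-x=0, pieces of triangle B above
  have h01 : Disjoint (interior pcT1) (interior pcT2) := by
    rw [pcT1, pcT2]
    refine disj_hulls _ _ 1 1 s2 (by norm_num) ?_ ?_ <;>
      rintro p (rfl|rfl|rfl) <;> simp <;> nlinarith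
  have h02 : Disjoint (interior pcT1) (interior pcMd) := by
    rw [pcT1, pcMd]
    refine disj_hulls _ _ (-1) 1 s2 (by norm_num) ?_ ?_ <;>
      rintro p (rfl|rfl|rfl) <;> simp <;> nlinarith
  have h03 : Disjoint (interior pcL1) (interior pcT1) := by
    rw [pcT1, pcL1]
    refine disj_hulls _ _ (-1) 1 0 (by norm_num) ?_ ?_ <;>
      rintro p (rfl|rfl|rfl) <;> simp <;> nlinarith
  have h04 : Disjoint (interior pcL2) (interior pcT1) := by
    rw [pcT1, pcL2]
    refine disj_hulls _ _ (-1) 1 0 (by norm_num) ?_ ?_ <;>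
      rintro p (rfl|rfl|rfl) <;> simp <;> nlinarith
  have h05 : Disjoint (interior pcT1) (interior pcSq) := by
    rw [pcT1, pcSq]
    refine disj_hulls _ _ 1 1 s2 (by norm_num) ?_ ?_ <;>
      rintro p (rfl|rfl|rfl|rfl) <;> simp <;> nlinarith
  have h06 : Disjoint (interior pcT1) (interior pcPa) := by
    rw [pcT1, pcPa]
    refine disj_hulls _ _ 0 1 s2 (by norm_num) ?_ ?_ <;>
      rintro p (rfl|rfl|rfl|rfl) <;> simp <;> nlinarith
  have h12 : Disjoint (interior pcT2) (interior pcMd) := by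
    rw [pcT2, pcMd]
    refine disj_hulls _ _ (-1) 1 s2 (by norm_num) ?_ ?_ <;>
      rintro p (rfl|rfl|rfl) <;> simp <;> nlinarith
  have h13 : Disjoint (interior pcL1) (interior pcT2) := by
    rw [pcT2, pcL1]
    refine disj_hulls _ _ (-1) 1 0 (by norm_num) ?_ ?_ <;>
      rintro p (rfl|rfl|rfl) <;> simp <;> nlinarith
  have h14 : Disjoint (interior pcL2) (interior pcT2) := by
    rw [pcT2, pcL2]
    refine disj_hulls _ _ (-1) 1 0 (by norm_num) ?_ ?_ <;>
      rintro p (rfl|rfl|rfl) <;> simp <;> nlinarith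
  have h15 : Disjoint (interior pcSq) (interior pcT2) := by
    rw [pcT2, pcSq]
    refine disj_hulls _ _ 1 1 (2*s2) (by norm_num) ?_ ?_
    · rintro p (rfl|rfl|rfl|rfl) <;> simp <;> nlinarith
    · rintro p (rfl|rfl|rfl) <;> simp <;> nlinarith
  have h16 : Disjoint (interior pcT2) (interior pcPa) := by
    rw [pcT2, pcPa]
    refine disj_hulls _ _ 0 1 (3*s2/2) (by norm_num) ?_ ?_
    · rintro p (rfl|rfl|rfl) <;> simp <;> nlinarith
    · rintro p (rfl|rfl|rfl|rfl) <;> simp <;> nlinarith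
  have h23 : Disjoint (interior pcL1) (interior pcMd) := by
    rw [pcMd, pcL1]
    refine disj_hulls _ _ (-1) 1 0 (by norm_num) ?_ ?_ <;>
      rintro p (rfl|rfl|rfl) <;> simp <;> nlinarith
  have h24 : Disjoint (interior pcL2) (interior pcMd) := by
    rw [pcMd, pcL2]
    refine disj_hulls _ _ (-1) 1 0 (by norm_num) ?_ ?_ <;>
      rintro p (rfl|rfl|rfl) <;> simp <;> nlinarith
  have h25 : Disjoint (interior pcSq) (interior pcMd) := by
    rw [pcMd, pcSq]
    refine disj_hulls _ _ (-1) 1 s2 (by norm_num) ?_ ?_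
    · rintro p (rfl|rfl|rfl|rfl) <;> simp <;> nlinarith
    · rintro p (rfl|rfl|rfl) <;> simp <;> nlinarith
  have h26 : Disjoint (interior pcPa) (interior pcMd) := by
    rw [pcMd, pcPa]
    refine disj_hulls _ _ (-1) 1 s2 (by norm_num) ?_ ?_
    · rintro p (rfl|rfl|rfl|rfl) <;> simp <;> nlinarith
    · rintro p (rfl|rfl|rfl) <;> simp <;> nlinarith
  have h34 : Disjoint (interior pcL1) (interior pcL2) := by
    rw [pcL1, pcL2]
    refine disj_hulls _ _ 1 0 2 (by norm_num) ?_ ?_ <;>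
      rintro p (rfl|rfl|rfl) <;> simp <;> nlinarith
  have h35 : Disjoint (interior pcL1) (interior pcSq) := by
    rw [pcSq, pcL1]
    refine disj_hulls _ _ (-1) 1 0 (by norm_num) ?_ ?_
    · rintro p (rfl|rfl|rfl) <;> simp <;> nlinarith
    · rintro p (rfl|rfl|rfl|rfl) <;> simp <;> nlinarith
  have h36 : Disjoint (interior pcL1) (interior pcPa) := by
    rw [pcPa, pcL1]
    refine disj_hulls _ _ (-1) 1 0 (by norm_num) ?_ ?_
    · rintro p (rfl|rfl|rfl) <;> simp <;> nlinarith
    · rintro p (rfl|rfl|rfl|rfl) <;> simp <;> nlinarith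
  have h45 : Disjoint (interior pcL2) (interior pcSq) := by
    rw [pcSq, pcL2]
    refine disj_hulls _ _ (-1) 1 0 (by norm_num) ?_ ?_
    · rintro p (rfl|rfl|rfl) <;> simp <;> nlinarith
    · rintro p (rfl|rfl|rfl|rfl) <;> simp <;> nlinarith
  have h46 : Disjoint (interior pcL2) (interior pcPa) := by
    rw [pcPa, pcL2]
    refine disj_hulls _ _ (-1) 1 0 (by norm_num) ?_ ?_
    · rintro p (rfl|rfl|rfl) <;> simp <;> nlinarith
    · rintro p (rfl|rfl|rfl|rfl) <;> simp <;> nlinarith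
  have h56 : Disjoint (interior pcSq) (interior pcPa) := by
    rw [pcSq, pcPa]
    refine disj_hulls _ _ 0 1 (3*s2/2) (by norm_num) ?_ ?_ <;>
      rintro p (rfl|rfl|rfl|rfl) <;> simp <;> nlinarith
  intro i j hij
  fin_cases i <;> fin_cases j <;>
    first
      | exact absurd rfl hij
      | exact h01 | exact h01.symm | exact h02 | exact h02.symm
      | exact h03 | exact h03.symm | exact h04 | exact h04.symm
      | exact h05 | exact h05.symm | exact h06 | exact h06.symm
      | exact h12 | exact h12.symm | exact h13 | exact h13.symm
      | exact h14 | exact h14.symm | exact h15 | exact h15.symm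
      | exact h16 | exact h16.symm | exact h23 | exact h23.symm
      | exact h24 | exact h24.symm | exact h25 | exact h25.symm
      | exact h26 | exact h26.symm | exact h34 | exact h34.symm
      | exact h35 | exact h35.symm | exact h36 | exact h36.symm
      | exact h45 | exact h45.symm | exact h46 | exact h46.symm
      | exact h56 | exact h56.symm

/-- The non-convex pentagon with vertices (0,0), (4,0), (2,2), (2√2,2√2), (0,2√2),
realized as the union of the triangle with vertices (0,0), (4,0), (2,2) and the
triangle with vertices (0,0), (2√2,2√2), (0,2√2), is a tangram; moreover it is a
non-lattice pentagon: its five vertices do not all lie in a common isometric image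
of ℤ². -/
theorem nonconvex_nonlattice_pentagon_is_tangram :
    IsTangram (convexHull ℝ {pt 0 0, pt 4 0, pt 2 2} ∪
      convexHull ℝ {pt 0 0, pt (2 * Real.sqrt 2) (2 * Real.sqrt 2),
        pt 0 (2 * Real.sqrt 2)}) ∧
    ¬ ∃ g : Plane ≃ᵢ Plane,
      ({pt 0 0, pt 4 0, pt 2 2, pt (2 * Real.sqrt 2) (2 * Real.sqrt 2),
        pt 0 (2 * Real.sqrt 2)} : Set Plane) ⊆ g '' intLatticePts := by
  constructor
  · show IsTangram (triA ∪ triB)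
    refine ⟨gfun, ?_, ?_⟩
    · rw [union_eq]
      exact (Set.iUnion_congr im_piece).symm
    · simpa only [im_piece] using piece_disj
  · rintro ⟨g, hsub⟩
    have h2 : pt 2 2 ∈ g '' intLatticePts := hsub (by simp)
    have h3 : pt (2*Real.sqrt 2) (2*Real.sqrt 2) ∈ g '' intLatticePts := hsub (by simp)
    obtain ⟨u, hu, hgu⟩ := h2
    obtain ⟨v, hv, hgv⟩ := h3
    obtain ⟨a, b, rfl⟩ := hu
    obtain ⟨a', b', rfl⟩ := hv
    have hd : dist (pt (a:ℝ) (b:ℝ)) (pt (a':ℝ) (b':ℝ))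
        = dist (pt 2 2) (pt (2*Real.sqrt 2) (2*Real.sqrt 2)) := by
      rw [← hgu, ← hgv, g.dist_eq]
    rw [pt_dist, pt_dist] at hd
    have hsq := congrArg (fun t : ℝ => t^2) hd
    rw [Real.sq_sqrt (by positivity), Real.sq_sqrt (by positivity)] at hsq
    have h2' : (Real.sqrt 2)^2 = 2 := Real.sq_sqrt (by norm_num)
    set m : ℤ := (a - a')^2 + (b - b')^2 with hm
    have hkey : ((m : ℝ)) = 24 - 16*Real.sqrt 2 := by
      push_cast [hm]
      linear_combination hsq + 8 * h2'
    exact irrational_sqrt_two ⟨(24 - m)/16, by push_cast; linarith⟩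
end
end
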